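/- Let a, b ∈ ℂ*. The H₄-module M_{(a,b)} = ℂ[s] (with p·x = x(s-1)a, q·x = x(s+1)b, r·x = 0, s·x = s·x(s)) is irreducible. -/

import Mathlib

/-!
Since `b ≠ 0`, the action of `q` makes `W` stable under the shift `x(s) ↦ x(s + 1)`, hence under
the difference operator `x(s + 1) - x(s)`, which strictly lowers the degree of a nonzero
polynomial unless the shift fixes it; and a polynomial fixed by the shift takes the same value at
all natural numbers, so it is constant. Descending in degree from any nonzero element of `W` thus
reaches a nonzero constant, and stability under multiplication by `s` then gives all of `ℂ[s]`.
-/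

open Polynomial

namespace Polynomial

theorem eq_C_eval_zero_of_taylor_one_eq {R : Type*} [CommRing R] [IsDomain R] [CharZero R]
    {p : R[X]} (h : taylor 1 p = p) : p = C (p.eval 0) := by
  have hperiodic : ∀ n : ℕ, p.eval (n : R) = p.eval 0 := by
    intro n
    induction n with
    | zero => simp
    | succ n ih => rw [Nat.cast_succ, ← taylor_eval, h, ih]
  refine eq_of_infinite_eval_eq _ _ ((Set.infinite_range_of_injective Nat.cast_injective).mono ?_)
  rintro _ ⟨n, rfl⟩
  simp [hperiodic]

theorem degree_taylor_sub_lt {R : Type*} [Ring R] {p : R[X]} (hp : p ≠ 0) (r : R) :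
    (taylor r p - p).degree < p.degree :=
  degree_taylor p r ▸
    degree_sub_lt_left (degree_taylor p r) ((taylor_eq_zero r p).not.mpr hp)
      (leadingCoeff_taylor r p)

theorem one_mem_of_forall_taylor_one_mem {K : Type*} [Field K] [CharZero K] {W : Submodule K K[X]}
    (hW : W ≠ ⊥) (hshift : ∀ p ∈ W, taylor 1 p ∈ W) : (1 : K[X]) ∈ W := by
  obtain ⟨p, hpW, hp⟩ := (Submodule.ne_bot_iff W).mp hW
  induction hn : p.natDegree using Nat.strong_induction_on generalizing p with
  | _ n ih =>
  by_cases hfixed : taylor 1 p = p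
  · have hpC := eq_C_eval_zero_of_taylor_one_eq hfixed
    have hc : p.eval 0 ≠ 0 := fun h0 => hp (by rw [hpC, h0, C_0])
    have := W.smul_mem (p.eval 0)⁻¹ hpW
    rwa [hpC, smul_C, eval_C, smul_eq_mul, inv_mul_cancel₀ hc, C_1] at this
  · have hdiff : taylor 1 p - p ≠ 0 := sub_ne_zero.mpr hfixed
    exact ih _ (hn ▸ natDegree_lt_natDegree hdiff (degree_taylor_sub_lt hp 1))
      _ (W.sub_mem (hshift p hpW) hpW) hdiff rfl

theorem submodule_eq_top_of_one_mem_of_forall_X_mul_mem {R : Type*} [CommSemiring R]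
    {W : Submodule R R[X]}
    (h1 : (1 : R[X]) ∈ W) (hX : ∀ p ∈ W, X * p ∈ W) : W = ⊤ := by
  refine eq_top_iff.mpr fun p _ => ?_
  induction p using Polynomial.induction_on with
  | C a => simpa [← C_mul'] using W.smul_mem a h1
  | add p q hp hq => exact W.add_mem (hp trivial) (hq trivial)
  | monomial n a h =>
    rw [pow_succ, ← mul_assoc, mul_comm]
    exact hX _ (h trivial)

end Polynomial

theorem stmt13_general (b : ℂ) (hb : b ≠ 0)
    (W : Submodule ℂ (Polynomial ℂ))
    (hQ : ∀ x ∈ W,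
      Polynomial.aeval (Polynomial.X + Polynomial.C 1 : Polynomial ℂ) x * Polynomial.C b ∈ W)
    (hS : ∀ x ∈ W, Polynomial.X * x ∈ W) :
    W = ⊥ ∨ W = ⊤ := by
  refine or_iff_not_imp_left.mpr fun hW => submodule_eq_top_of_one_mem_of_forall_X_mul_mem ?_ hS
  refine one_mem_of_forall_taylor_one_mem hW fun p hp => ?_
  have hshift : b⁻¹ • (aeval (X + C 1) p * C b) = taylor 1 p := by
    rw [taylor_apply, comp_eq_aeval, smul_eq_C_mul, mul_left_comm, ← C_mul, inv_mul_cancel₀ hb,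
      C_1, mul_one]
  exact hshift ▸ W.smul_mem b⁻¹ (hQ p hp)

/-- For a, b ∈ ℂ*, the H₄-module M_{(a,b)} = ℂ[s]
(p·x = x(s-1)a, q·x = x(s+1)b, r·x = 0, s·x = s·x(s)) is irreducible: every
ℂ-subspace invariant under the actions is 0 or everything.  (r acts by 0.) -/
theorem stmt13 (a b : ℂ) (ha : a ≠ 0) (hb : b ≠ 0)
    (W : Submodule ℂ (Polynomial ℂ))
    (hP : ∀ x ∈ W,
      Polynomial.aeval (Polynomial.X - Polynomial.C 1 : Polynomial ℂ) x * Polynomial.C a ∈ W)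
    (hQ : ∀ x ∈ W,
      Polynomial.aeval (Polynomial.X + Polynomial.C 1 : Polynomial ℂ) x * Polynomial.C b ∈ W)
    (hS : ∀ x ∈ W, Polynomial.X * x ∈ W) :
    W = ⊥ ∨ W = ⊤ :=
  stmt13_general b hb W hQ hS
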